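/- Suppose u = Σ_{b ∈ Trees} λ^{|b|} u(b) converges absolutely in a Banach space I (i.e., |u| := Σ_b |λ|^{|b|} ‖u(b)‖ < ∞), and let Φ(b): I^{⊗‖b‖} → S be bounded multilinear maps satisfying ‖Φ(b)‖ ≤ ‖Φ(∘)‖^{N(b)} Π_{i∈I(b)} ‖F_{r_b(i)}‖ with F₀ = F₁ = 0 and Σ_p ‖F_p‖ z^p entire. If |λ| |u|^{−1} |F|(16‖Φ(∘)‖ |u|) < 1, where |F|(z) = Σ_p ‖F_p‖ z^p, then the double series Σ_{b ∈ Trees} Σ_{E ∈ Trees^{‖b‖}} |λ|^{|b| + |E|} ‖Φ(b)(u(E₁) ⊗ ⋯ ⊗ u(E_{‖b‖}))‖ converges. -/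

import Mathlib

inductive PTree : Type
  | node : List PTree → PTree

namespace PTree

instance : Inhabited PTree := ⟨node []⟩

/-- the single-leaf tree ∘ -/
def leaf : PTree := node []

/-- number of leaves ‖b‖ -/
def leaves : PTree → ℕ
  | node ts => if ts.isEmpty then 1 else (ts.attach.map fun t => leaves t.1).sum
decreasing_by simp only [PTree.node.sizeOf_spec]; have := List.sizeOf_lt_of_mem t.2; omega


/-- number of internal vertices |b| -/
def internals : PTree → ℕ
  | node ts => if ts.isEmpty then 0 else 1 + (ts.attach.map fun t => internals t.1).sum
decreasing_by simp only [PTree.node.sizeOf_spec]; have := List.sizeOf_lt_of_mem t.2; omega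


/-- total number of vertices N(b) -/
def Ntot (b : PTree) : ℕ := b.leaves + b.internals

/-- non-degenerate: every internal vertex has at least two children -/
def ND : PTree → Prop
  | node ts => ts.isEmpty ∨ (2 ≤ ts.length ∧ ∀ t ∈ ts.attach, ND t.1)
decreasing_by simp only [PTree.node.sizeOf_spec]; have := List.sizeOf_lt_of_mem t.2; omega


/-- the list of numbers of children of the internal vertices of b -/
def childCounts : PTree → List ℕ
  | node ts => if ts.isEmpty then [] else ts.length :: (ts.attach.map fun t => childCounts t.1).flatten
decreasing_by simp only [PTree.node.sizeOf_spec]; have := List.sizeOf_lt_of_mem t.2; omega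


mutual
/-- graft trees from the list E onto the successive leaves of b (left to right);
returns the grafted tree together with the unused suffix of E. -/
def graft : PTree → List PTree → PTree × List PTree
  | node ts, E =>
    if ts.isEmpty then (E.headI, E.tail)
    else
      let p := graftL ts E
      (node p.1, p.2)
/-- graft trees from the list E onto the leaves of the forest l -/
def graftL : List PTree → List PTree → List PTree × List PTree
  | [], E => ([], E)
  | t :: ts, E =>
    let p := graft t E
    let q := graftL ts p.2
    (p.1 :: q.1, q.2)
end

/-- E ∝ b : graft the tuple E onto the leaves of b -/
def graftT (b : PTree) (E : List PTree) : PTree := (b.graft E).1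

mutual
/-- the list of all decompositions b = E ∝ c, as pairs (c, E) -/
def decomps : PTree → List (PTree × List PTree)
  | node ts =>
    (leaf, [node ts]) ::
      (if ts.isEmpty then []
       else (decompsL ts).map fun p => (node p.1, p.2))
/-- decompositions of a forest: pairs (list of bases, concatenated grafted tuples) -/
def decompsL : List PTree → List (List PTree × List PTree)
  | [] => [([], [])]
  | t :: ts =>
    (decomps t).flatMap fun p => (decompsL ts).map fun q => (p.1 :: q.1, p.2 ++ q.2)
end

theorem leaves_pos : ∀ b : PTree, 0 < b.leaves
  | node ts => by
    show 0 < leaves (node ts)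
    unfold leaves
    split
    · exact one_pos
    · rename_i h
      have hne : ts ≠ [] := by simpa [List.isEmpty_iff] using h
      obtain ⟨t, ts', rfl⟩ := List.exists_cons_of_ne_nil hne
      have := leaves_pos t
      simp only [List.attach_cons, List.map_cons, List.sum_cons]
      positivity

end PTree



namespace PTree

mutual
/-- preorder list of arities of all vertices -/
def arities : PTree → List ℕ
  | node ts => ts.length :: aritiesL ts
def aritiesL : List PTree → List ℕ
  | [] => []
  | t :: ts => arities t ++ aritiesL ts
end

lemma arities_node (ts : List PTree) : arities (node ts) = ts.length :: aritiesL ts := by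
  rw [arities]

lemma aritiesL_nil : aritiesL [] = [] := by rw [aritiesL]

lemma aritiesL_cons (t : PTree) (ts : List PTree) :
    aritiesL (t :: ts) = arities t ++ aritiesL ts := by rw [aritiesL]

mutual
theorem arities_append_inj : ∀ (b b' : PTree) (l l' : List ℕ),
    arities b ++ l = arities b' ++ l' → b = b' ∧ l = l'
  | node ts, node ts', l, l', h => by
    rw [arities_node, arities_node] at h
    simp only [List.cons_append, List.cons.injEq] at h
    obtain ⟨hlen, htail⟩ := h
    obtain ⟨hts, hl⟩ := aritiesL_append_inj ts ts' l l' hlen htail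
    exact ⟨by rw [hts], hl⟩
theorem aritiesL_append_inj : ∀ (ts ts' : List PTree) (l l' : List ℕ),
    ts.length = ts'.length → aritiesL ts ++ l = aritiesL ts' ++ l' → ts = ts' ∧ l = l'
  | [], [], l, l', _, h => ⟨rfl, by simpa [aritiesL_nil] using h⟩
  | [], _ :: _, _, _, hlen, _ => by simp at hlen
  | _ :: _, [], _, _, hlen, _ => by simp at hlen
  | t :: ts, t' :: ts', l, l', hlen, h => by
    rw [aritiesL_cons, aritiesL_cons, List.append_assoc, List.append_assoc] at h
    obtain ⟨ht, h2⟩ := arities_append_inj t t' _ _ h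
    obtain ⟨hts, hl⟩ := aritiesL_append_inj ts ts' l l' (by simpa using hlen) h2
    exact ⟨by rw [ht, hts], hl⟩
end

theorem arities_injective : Function.Injective arities := fun b b' h =>
  (arities_append_inj b b' [] [] (by simpa using h)).1

lemma leaves_node (ts : List PTree) :
    leaves (node ts) = if ts.isEmpty then 1 else (ts.map leaves).sum := by
  rw [leaves, List.attach_map_val]

lemma internals_node (ts : List PTree) :
    internals (node ts) = if ts.isEmpty then 0 else 1 + (ts.map internals).sum := by
  rw [internals, List.attach_map_val]

lemma childCounts_node (ts : List PTree) :
    childCounts (node ts) =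
      if ts.isEmpty then [] else ts.length :: (ts.map childCounts).flatten := by
  rw [childCounts, List.attach_map_val]

/-- the per-vertex weight function -/
noncomputable def Hf (c : ℕ → ℝ) (L U phi : ℝ) (a : ℕ) : ℝ :=
  ((if a = 0 then 1 else 0) + L * U⁻¹ * (c a * (16 * phi * U) ^ a)) / 16

mutual
theorem prod_arities_eq (c : ℕ → ℝ) (L U phi : ℝ) (hc0 : c 0 = 0) (hU : U ≠ 0)
    (hphi : phi ≠ 0) : ∀ b : PTree,
    (16 * phi * U) * ((b.arities.map (Hf c L U phi)).prod) =
      L ^ b.internals * phi ^ b.Ntot * ((b.childCounts.map c).prod) * U ^ b.leaves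
  | node ts => by
    rcases eq_or_ne ts [] with rfl | hne
    · simp only [arities_node, aritiesL_nil, List.length_nil, List.map_cons, List.map_nil,
        List.prod_cons, List.prod_nil, Ntot, leaves_node, internals_node, childCounts_node,
        List.isEmpty_nil, if_true, Hf, hc0]
      norm_num
      ring
    · have hE : ts.isEmpty = false := by simpa [List.isEmpty_iff] using hne
      have hn0 : ts.length ≠ 0 := by simpa [List.length_eq_zero_iff] using hne
      have key := prod_aritiesL_eq c L U phi hc0 hU hphi ts
      rw [arities_node, List.map_cons, List.prod_cons]
      simp only [Ntot, leaves_node, internals_node, childCounts_node, hE, Bool.false_eq_true, if_false,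
        List.map_cons, List.prod_cons]
      have hM : (16 * phi * U) ≠ 0 := by positivity
      have hMn : (16 * phi * U) ^ ts.length ≠ 0 := pow_ne_zero _ hM
      have hP : ((aritiesL ts).map (Hf c L U phi)).prod =
          ((16 * phi * U) ^ ts.length)⁻¹ *
            (L ^ (ts.map internals).sum * phi ^ ((ts.map leaves).sum + (ts.map internals).sum) *
              (((ts.map childCounts).flatten).map c).prod * U ^ (ts.map leaves).sum) := by
        rw [← key]; field_simp
      rw [hP, Hf, if_neg hn0]
      have hup : U ^ ((ts.map leaves).sum) * U⁻¹ = U ^ ((ts.map leaves).sum) * U⁻¹ := rfl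
      field_simp
      ring
termination_by b => sizeOf b

theorem prod_aritiesL_eq (c : ℕ → ℝ) (L U phi : ℝ) (hc0 : c 0 = 0) (hU : U ≠ 0)
    (hphi : phi ≠ 0) : ∀ ts : List PTree,
    (16 * phi * U) ^ ts.length * ((aritiesL ts).map (Hf c L U phi)).prod =
      L ^ (ts.map internals).sum *
        phi ^ ((ts.map leaves).sum + (ts.map internals).sum) *
        (((ts.map childCounts).flatten).map c).prod * U ^ (ts.map leaves).sum
  | [] => by simp [aritiesL_nil]
  | t :: ts => by
    have h1 := prod_arities_eq c L U phi hc0 hU hphi t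
    have h2 := prod_aritiesL_eq c L U phi hc0 hU hphi ts
    rw [aritiesL_cons]
    simp only [List.map_cons, List.map_append, List.prod_append, List.sum_cons,
      List.flatten, List.append_eq, List.prod_cons, List.length_cons]
    have : (16 * phi * U) ^ (ts.length + 1) = (16 * phi * U) * (16 * phi * U) ^ ts.length := by
      ring
    rw [this]
    calc (16 * phi * U) * (16 * phi * U) ^ ts.length *
          (((arities t).map (Hf c L U phi)).prod * ((aritiesL ts).map (Hf c L U phi)).prod)
        = ((16 * phi * U) * ((arities t).map (Hf c L U phi)).prod) *
          ((16 * phi * U) ^ ts.length * ((aritiesL ts).map (Hf c L U phi)).prod) := by ring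
      _ = _ := by
          rw [h1, h2, Ntot]
          ring
termination_by ts => sizeOf ts
end

end PTree

theorem summable_tuple {α : Type*} {v : α → ℝ} (hv : Summable v) (h0 : ∀ a, 0 ≤ v a) :
    ∀ n : ℕ, Summable (fun f : Fin n → α => ∏ i, v (f i)) ∧
      (∑' f : Fin n → α, ∏ i, v (f i)) = (∑' a, v a) ^ n := by
  intro n
  induction n with
  | zero =>
    have hone : ∀ f : Fin 0 → α, (∏ i, v (f i)) = 1 := fun f => by simp
    have hs : HasSum (fun f : Fin 0 → α => ∏ i, v (f i)) 1 := by
      have := hasSum_single (f := fun f : Fin 0 → α => ∏ i, v (f i)) default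
        (fun b hb => absurd (Subsingleton.elim b default) hb)
      simpa [hone] using this
    exact ⟨hs.summable, by rw [hs.tsum_eq, pow_zero]⟩
  | succ n ih =>
    have hsum2 : Summable (fun p : α × (Fin n → α) => v p.1 * ∏ i, v (p.2 i)) := by
      apply Summable.mul_of_nonneg hv ih.1 (fun a => h0 a)
        (fun f => Finset.prod_nonneg fun i _ => h0 _)
    let e : α × (Fin n → α) ≃ (Fin (n + 1) → α) := Fin.consEquiv (fun _ : Fin (n + 1) => α)
    have hcomp : ∀ p : α × (Fin n → α),
        (∏ i, v ((e p) i)) = v p.1 * ∏ i, v (p.2 i) := by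
      intro p
      have h1 : e p = Fin.cons p.1 p.2 := rfl
      rw [h1, Fin.prod_univ_succ]
      simp
    have hsum : Summable (fun f : Fin (n + 1) → α => ∏ i, v (f i)) := by
      apply (Equiv.summable_iff e).mp
      exact hsum2.congr fun p => (hcomp p).symm
    refine ⟨hsum, ?_⟩
    rw [← Equiv.tsum_eq e (fun f => ∏ i, v (f i))]
    rw [tsum_congr hcomp]
    rw [Summable.tsum_prod' hsum2 (fun a => (ih.1.mul_left (v a)))]
    have h2 : ∀ a, (∑' f : Fin n → α, v a * ∏ i, v (f i)) = v a * (∑' b, v b) ^ n := by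
      intro a; rw [tsum_mul_left, ih.2]
    rw [tsum_congr h2, tsum_mul_right, pow_succ]
    ring

theorem summable_list_prod {α : Type*} {H : α → ℝ} (hH : Summable H) (h0 : ∀ a, 0 ≤ H a)
    (hA : (∑' a, H a) < 1) : Summable fun l : List α => ((l.map H).prod) := by
  have hA0 : (0:ℝ) ≤ ∑' a, H a := tsum_nonneg h0
  have hsig : Summable (fun p : Σ n, Fin n → α => ∏ i, H (p.2 i)) := by
    refine (summable_sigma_of_nonneg ?_).mpr ⟨fun n => (summable_tuple hH h0 n).1, ?_⟩
    · intro p; exact Finset.prod_nonneg fun i _ => h0 _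
    · exact (summable_geometric_of_lt_one hA0 hA).congr
        fun n => ((summable_tuple hH h0 n).2).symm
  have := (List.equivSigmaTuple (α := α)).summable_iff.mpr hsig
  refine this.congr fun l => ?_
  simp only [Function.comp, List.equivSigmaTuple]
  conv_rhs => rw [← List.ofFn_get l]
  rw [List.map_ofFn, List.prod_ofFn]
  rfl

set_option maxHeartbeats 1600000 in
/-- convergence of the double series
Σ_b Σ_E |λ|^{|b|+|E|} ‖Φ(b)(u(E₁) ⊗ ⋯ ⊗ u(E_{‖b‖}))‖. -/
theorem butcher_double_series_summable
    {I S : Type*} [NormedAddCommGroup I] [NormedSpace ℝ I]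
    [NormedAddCommGroup S] [NormedSpace ℝ S]
    (Φ : (b : PTree) → ContinuousMultilinearMap ℝ (fun _ : Fin b.leaves => I) S)
    (c : ℕ → ℝ) (hc : ∀ p, 0 ≤ c p) (hc0 : c 0 = 0) (hc1 : c 1 = 0)
    (hent : ∀ z : ℝ, Summable fun p => c p * z ^ p)
    (hΦ : ∀ b : PTree, b.ND →
      ‖Φ b‖ ≤ ‖Φ PTree.leaf‖ ^ b.Ntot * (b.childCounts.map c).prod)
    (lam : ℝ) (u : PTree → I)
    (husum : Summable fun b : {b : PTree // b.ND} => |lam| ^ b.1.internals * ‖u b.1‖)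
    (hcond : |lam| * (∑' b : {b : PTree // b.ND}, |lam| ^ b.1.internals * ‖u b.1‖)⁻¹ *
        (∑' r : ℕ, c r *
          (16 * ‖Φ PTree.leaf‖ * ∑' b : {b : PTree // b.ND}, |lam| ^ b.1.internals * ‖u b.1‖) ^ r)
      < 1) :
    Summable fun q : Σ b : {b : PTree // b.ND}, Fin b.1.leaves → {b : PTree // b.ND} =>
      |lam| ^ (q.1.1.internals + ∑ i, (q.2 i).1.internals) *
        ‖Φ q.1.1 fun i => u (q.2 i).1‖ := by
  classical
  have hv0 : ∀ b : {b : PTree // b.ND}, 0 ≤ |lam| ^ b.1.internals * ‖u b.1‖ :=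
    fun b => mul_nonneg (pow_nonneg (abs_nonneg _) _) (norm_nonneg _)
  set U := ∑' b : {b : PTree // b.ND}, |lam| ^ b.1.internals * ‖u b.1‖ with hUdef
  have hU0 : 0 ≤ U := tsum_nonneg hv0
  have htup := summable_tuple husum hv0
  -- summability of the outer weights
  have hkey : Summable (fun b : {b : PTree // b.ND} =>
      |lam| ^ b.1.internals * ‖Φ b.1‖ * U ^ b.1.leaves) := by
    rcases eq_or_ne ‖Φ PTree.leaf‖ 0 with hphi | hphi
    · have hz : ∀ b : {b : PTree // b.ND}, ‖Φ b.1‖ = 0 := by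
        intro b
        have h1 := hΦ b.1 b.2
        have hN : b.1.Ntot ≠ 0 := by
          have := PTree.leaves_pos b.1
          unfold PTree.Ntot; omega
        rw [hphi, zero_pow hN, zero_mul] at h1
        exact le_antisymm h1 (norm_nonneg _)
      exact summable_zero.congr fun b => by rw [hz b]; ring
    rcases eq_or_ne U 0 with hU | hU
    · have hz : ∀ b : {b : PTree // b.ND}, U ^ b.1.leaves = 0 := by
        intro b
        have := PTree.leaves_pos b.1
        rw [hU, zero_pow (by omega)]
      exact summable_zero.congr fun b => by rw [hz b]; ring
    · set M := 16 * ‖Φ PTree.leaf‖ * U with hMdef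
      have hM0 : 0 ≤ M := by
        rw [hMdef]
        exact mul_nonneg (mul_nonneg (by norm_num) (norm_nonneg _)) hU0
      set H := PTree.Hf c |lam| U ‖Φ PTree.leaf‖ with hHdef
      have hind : Summable (fun a : ℕ => if a = 0 then (1:ℝ) else 0) :=
        (hasSum_ite_eq 0 (1:ℝ)).summable
      have h2 : Summable (fun a => |lam| * U⁻¹ * (c a * M ^ a)) := (hent M).mul_left _
      have hHsum : Summable H := by
        rw [hHdef]; unfold PTree.Hf
        exact (hind.add h2).div_const 16
      have hH0 : ∀ a, 0 ≤ H a := by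
        intro a
        rw [hHdef]; unfold PTree.Hf
        apply div_nonneg _ (by norm_num)
        apply add_nonneg (by split <;> norm_num)
        exact mul_nonneg (mul_nonneg (abs_nonneg _) (inv_nonneg.mpr hU0))
          (mul_nonneg (hc a) (pow_nonneg hM0 _))
      have hrho0 : 0 ≤ |lam| * U⁻¹ * ∑' a, c a * M ^ a := by
        apply mul_nonneg (mul_nonneg (abs_nonneg _) (inv_nonneg.mpr hU0))
        exact tsum_nonneg fun r => mul_nonneg (hc r) (pow_nonneg hM0 r)
      have hHtsum : (∑' a, H a) < 1 := by
        have ht : (∑' a, H a) =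
            (1 + |lam| * U⁻¹ * ∑' a, c a * M ^ a) / 16 := by
          rw [hHdef]; unfold PTree.Hf
          rw [tsum_div_const, Summable.tsum_add hind h2, (hasSum_ite_eq 0 (1:ℝ)).tsum_eq,
            tsum_mul_left]
        rw [ht]
        have := hcond
        linarith
      have SL := summable_list_prod hHsum hH0 hHtsum
      have hinj : Function.Injective
          (fun b : {b : PTree // b.ND} => b.1.arities) :=
        fun b b' h => Subtype.ext (PTree.arities_injective h)
      have SW : Summable (fun b : {b : PTree // b.ND} => ((b.1.arities.map H).prod)) :=
        SL.comp_injective hinj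
      apply Summable.of_nonneg_of_le
        (fun b => mul_nonneg (mul_nonneg (pow_nonneg (abs_nonneg _) _) (norm_nonneg _))
          (pow_nonneg hU0 _))
        _ (SW.mul_left M)
      intro b
      have identity := PTree.prod_arities_eq c |lam| U ‖Φ PTree.leaf‖ hc0 hU hphi b.1
      calc |lam| ^ b.1.internals * ‖Φ b.1‖ * U ^ b.1.leaves
          ≤ |lam| ^ b.1.internals *
              (‖Φ PTree.leaf‖ ^ b.1.Ntot * ((b.1.childCounts.map c).prod)) *
              U ^ b.1.leaves := by
            apply mul_le_mul_of_nonneg_right _ (pow_nonneg hU0 _)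
            exact mul_le_mul_of_nonneg_left (hΦ b.1 b.2) (pow_nonneg (abs_nonneg lam) _)
        _ = M * ((b.1.arities.map H).prod) := by
            rw [hHdef, hMdef, identity]; ring
  -- the majorant double series
  have hGsum : Summable (fun q : Σ b : {b : PTree // b.ND},
        Fin b.1.leaves → {b : PTree // b.ND} =>
      |lam| ^ q.1.1.internals * ‖Φ q.1.1‖ *
        ∏ i, (|lam| ^ (q.2 i).1.internals * ‖u (q.2 i).1‖)) := by
    refine (summable_sigma_of_nonneg fun q =>
      mul_nonneg (mul_nonneg (pow_nonneg (abs_nonneg _) _) (norm_nonneg _))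
        (Finset.prod_nonneg fun i _ => hv0 _)).mpr ⟨?_, ?_⟩
    · intro b
      show Summable fun E : Fin b.1.leaves → {b : PTree // b.ND} =>
        |lam| ^ b.1.internals * ‖Φ b.1‖ *
          ∏ i, (|lam| ^ (E i).1.internals * ‖u (E i).1‖)
      exact ((htup b.1.leaves).1).mul_left _
    · refine hkey.congr fun b => ?_
      show _ = ∑' E : Fin b.1.leaves → {b : PTree // b.ND},
        |lam| ^ b.1.internals * ‖Φ b.1‖ *
          ∏ i, (|lam| ^ (E i).1.internals * ‖u (E i).1‖)
      rw [tsum_mul_left, (htup b.1.leaves).2, ← hUdef]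
  -- conclude by domination
  apply Summable.of_nonneg_of_le _ _ hGsum
  · intro q
    positivity
  · intro q
    obtain ⟨b, E⟩ := q
    calc |lam| ^ (b.1.internals + ∑ i, (E i).1.internals) * ‖Φ b.1 fun i => u (E i).1‖
        ≤ |lam| ^ (b.1.internals + ∑ i, (E i).1.internals) *
            (‖Φ b.1‖ * ∏ i, ‖u (E i).1‖) := by
          exact mul_le_mul_of_nonneg_left (ContinuousMultilinearMap.le_opNorm _ _)
            (pow_nonneg (abs_nonneg _) _)
      _ = |lam| ^ b.1.internals * ‖Φ b.1‖ *
            ∏ i, (|lam| ^ (E i).1.internals * ‖u (E i).1‖) := by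
          rw [pow_add, ← Finset.prod_pow_eq_pow_sum, Finset.prod_mul_distrib]
          ring
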